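/- Suppose 0 < α < 1 and b is an even positive integer (so that b^{1−α} > 1). Then for every positive integer m and every nonnegative integer j, |Φ(b^{−m}(j+1)) − Φ(b^{−m}j)| ≥ M_α · b^{−αm}, where M_α = 1 − 1/(b^{1−α} − 1). -/
import Mathlib


open Set Filter Topology

/-- The sawtooth function `φ(x) = dist(x, 2ℤ)`. -/
noncomputable def sawtooth (x : ℝ) : ℝ :=
  Metric.infDist x {y : ℝ | ∃ m : ℤ, y = 2 * m}

/-- Katzourakis' function `Φ(x) = Σ_{k=0}^∞ b^{-kα} φ(b^k x)`. -/
noncomputable def Phi (b : ℕ) (α : ℝ) (x : ℝ) : ℝ :=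
  ∑' k : ℕ, (b : ℝ) ^ (-((k : ℝ) * α)) * sawtooth ((b : ℝ) ^ k * x)

lemma evenSet_nonempty : ({y : ℝ | ∃ m : ℤ, y = 2 * m}).Nonempty :=
  ⟨0, ⟨0, by norm_num⟩⟩

lemma sawtooth_nonneg (x : ℝ) : 0 ≤ sawtooth x := Metric.infDist_nonneg

lemma sawtooth_le_one (x : ℝ) : sawtooth x ≤ 1 := by
  have hmem : (2 * (round (x / 2) : ℤ) : ℝ) ∈ {y : ℝ | ∃ m : ℤ, y = 2 * m} :=
    ⟨round (x / 2), by push_cast; ring⟩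
  refine le_trans (Metric.infDist_le_dist_of_mem hmem) ?_
  rw [Real.dist_eq]
  have h := abs_sub_round (x / 2)
  have : x - 2 * ((round (x / 2) : ℤ) : ℝ) = 2 * (x / 2 - (round (x / 2) : ℝ)) := by
    push_cast; ring
  rw [this, abs_mul]
  rw [abs_of_nonneg (by norm_num : (0:ℝ) ≤ 2)]
  push_cast at h ⊢
  linarith

lemma sawtooth_lipschitz (x y : ℝ) : |sawtooth x - sawtooth y| ≤ |x - y| := by
  rw [abs_sub_le_iff]
  constructor
  · have := Metric.infDist_le_infDist_add_dist (x := x) (y := y)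
      (s := {y : ℝ | ∃ m : ℤ, y = 2 * m})
    rw [Real.dist_eq] at this
    unfold sawtooth
    linarith
  · have := Metric.infDist_le_infDist_add_dist (x := y) (y := x)
      (s := {y : ℝ | ∃ m : ℤ, y = 2 * m})
    rw [Real.dist_eq, abs_sub_comm] at this
    unfold sawtooth
    linarith

lemma sawtooth_even_nat (n : ℕ) (h : Even n) : sawtooth (n : ℝ) = 0 := by
  obtain ⟨r, hr⟩ := h
  have hmem : (n : ℝ) ∈ {y : ℝ | ∃ m : ℤ, y = 2 * m} := ⟨r, by rw [hr]; push_cast; ring⟩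
  have h1 := Metric.infDist_le_dist_of_mem (x := (n:ℝ)) hmem
  rw [dist_self] at h1
  exact le_antisymm h1 (sawtooth_nonneg _)

lemma sawtooth_odd_nat (n : ℕ) (h : Odd n) : sawtooth (n : ℝ) = 1 := by
  obtain ⟨r, hr⟩ := h
  refine le_antisymm (sawtooth_le_one _) ?_
  unfold sawtooth
  refine le_of_not_gt fun hlt => ?_
  rw [Metric.infDist_lt_iff evenSet_nonempty] at hlt
  obtain ⟨y, ⟨t, rfl⟩, hy⟩ := hlt
  rw [Real.dist_eq] at hy
  have : ((n : ℝ)) - 2 * t = ((n : ℤ) - 2 * t : ℤ) := by push_cast; ring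
  rw [this] at hy
  rw [← Int.cast_abs] at hy
  have h1 : (1 : ℤ) ≤ |(n : ℤ) - 2 * t| := by
    refine Int.one_le_abs ?_
    intro hc
    omega
  have : (1 : ℝ) ≤ ((|(n : ℤ) - 2 * t| : ℤ) : ℝ) := by exact_mod_cast h1
  linarith

lemma phi_summable (b : ℕ) (hb : 1 < b) (α : ℝ) (hα : 0 < α) (x : ℝ) :
    Summable (fun k : ℕ => (b : ℝ) ^ (-((k : ℝ) * α)) * sawtooth ((b : ℝ) ^ k * x)) := by
  have hb1 : (1 : ℝ) < b := by exact_mod_cast hb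
  have hb0 : (0 : ℝ) < b := by linarith
  have hr0 : (0 : ℝ) ≤ (b : ℝ) ^ (-α) := Real.rpow_nonneg hb0.le _
  have hr1 : (b : ℝ) ^ (-α) < 1 :=
    Real.rpow_lt_one_of_one_lt_of_neg hb1 (by linarith)
  refine Summable.of_nonneg_of_le (fun k => ?_) (fun k => ?_)
    (summable_geometric_of_lt_one hr0 hr1)
  · exact mul_nonneg (Real.rpow_nonneg hb0.le _) (sawtooth_nonneg _)
  · have hpow : ((b : ℝ) ^ (-α)) ^ k = (b : ℝ) ^ (-((k : ℝ) * α)) := by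
      rw [← Real.rpow_natCast ((b:ℝ) ^ (-α)) k, ← Real.rpow_mul hb0.le]
      ring_nf
    rw [← hpow]
    calc ((b : ℝ) ^ (-α)) ^ k * sawtooth ((b : ℝ) ^ k * x)
        ≤ ((b : ℝ) ^ (-α)) ^ k * 1 := by
          apply mul_le_mul_of_nonneg_left (sawtooth_le_one _)
          positivity
      _ = ((b : ℝ) ^ (-α)) ^ k := mul_one _

/-- For `0 < α < 1` and `b` an even positive integer (so `b^{1-α} > 1`), for every
positive integer `m` and nonnegative integer `j`,
`|Φ(b^{-m}(j+1)) - Φ(b^{-m} j)| ≥ M_α b^{-αm}` with `M_α = 1 - 1/(b^{1-α} - 1)`. -/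
theorem phi_diff_lower_bound (α : ℝ) (hα0 : 0 < α) (hα1 : α < 1) (b : ℕ) (hb : 0 < b)
    (hbe : Even b) (m : ℕ) (hm : 0 < m) (j : ℕ) :
    (1 - 1 / ((b : ℝ) ^ (1 - α) - 1)) * (b : ℝ) ^ (-(α * (m : ℝ))) ≤
      |Phi b α ((b : ℝ) ^ (-(m : ℝ)) * ((j : ℝ) + 1)) -
        Phi b α ((b : ℝ) ^ (-(m : ℝ)) * (j : ℝ))| := by
  have hb2 : 2 ≤ b := by
    rcases hbe with ⟨r, hr⟩; omega
  have hb1 : (1 : ℝ) < b := by exact_mod_cast (by omega : 1 < b)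
  have hb0 : (0 : ℝ) < b := by linarith
  set x₁ : ℝ := (b : ℝ) ^ (-(m : ℝ)) * ((j : ℝ) + 1) with hx₁
  set x₂ : ℝ := (b : ℝ) ^ (-(m : ℝ)) * (j : ℝ) with hx₂
  set f : ℕ → ℝ := fun k => (b : ℝ) ^ (-((k : ℝ) * α)) * sawtooth ((b : ℝ) ^ k * x₁) with hf
  set g : ℕ → ℝ := fun k => (b : ℝ) ^ (-((k : ℝ) * α)) * sawtooth ((b : ℝ) ^ k * x₂) with hg
  have hsf : Summable f := phi_summable b (by omega) α hα0 x₁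
  have hsg : Summable g := phi_summable b (by omega) α hα0 x₂
  have hdiff : Phi b α x₁ - Phi b α x₂ = ∑' k : ℕ, (f k - g k) := by
    rw [Summable.tsum_sub hsf hsg]; rfl
  -- key power identity for k ≥ m
  have hkey : ∀ k : ℕ, m ≤ k → ∀ t : ℕ, (b : ℝ) ^ k * ((b : ℝ) ^ (-(m : ℝ)) * (t : ℝ))
      = ((b ^ (k - m) * t : ℕ) : ℝ) := by
    intro k hk t
    have : (b : ℝ) ^ k * (b : ℝ) ^ (-(m : ℝ)) = (b : ℝ) ^ (k - m : ℕ) := by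
      rw [← Real.rpow_natCast (b : ℝ) k, ← Real.rpow_natCast (b : ℝ) (k - m),
        ← Real.rpow_add hb0]
      congr 1
      have : ((k - m : ℕ) : ℝ) = (k : ℝ) - (m : ℝ) := by
        push_cast [Nat.cast_sub hk]; ring
      rw [this]; ring
    push_cast
    rw [← mul_assoc, this]
  -- vanishing for k > m
  have hvanish : ∀ k ∉ Finset.range (m + 1), f k - g k = 0 := by
    intro k hk
    simp only [Finset.mem_range] at hk
    have hkm : m + 1 ≤ k := by omega
    have hkm' : m ≤ k := by omega
    have heven : ∀ t : ℕ, Even (b ^ (k - m) * t) := by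
      intro t
      apply Even.mul_right
      exact hbe.pow_of_ne_zero (by omega)
    have h1 : sawtooth ((b : ℝ) ^ k * x₁) = 0 := by
      rw [hx₁]
      have : (j : ℝ) + 1 = ((j + 1 : ℕ) : ℝ) := by push_cast; ring
      rw [this, hkey k hkm' (j + 1)]
      exact sawtooth_even_nat _ (heven _)
    have h2 : sawtooth ((b : ℝ) ^ k * x₂) = 0 := by
      rw [hx₂, hkey k hkm' j]
      exact sawtooth_even_nat _ (heven _)
    simp [hf, hg, h1, h2]
  have hsum : Phi b α x₁ - Phi b α x₂ =
      (∑ k ∈ Finset.range m, (f k - g k)) + (f m - g m) := by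
    rw [hdiff, tsum_eq_sum hvanish, Finset.sum_range_succ]
  -- value of the m-th term
  set c : ℕ → ℝ := fun k => (b : ℝ) ^ (-((k : ℝ) * α)) with hc
  have hbm1 : (b : ℝ) ^ m * x₁ = ((j + 1 : ℕ) : ℝ) := by
    rw [hx₁]
    have : (j : ℝ) + 1 = ((j + 1 : ℕ) : ℝ) := by push_cast; ring
    rw [this, hkey m le_rfl (j + 1)]
    norm_num
  have hbm2 : (b : ℝ) ^ m * x₂ = (j : ℝ) := by
    rw [hx₂, hkey m le_rfl j]
    norm_num
  have hmterm : |f m - g m| = c m := by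
    rcases Nat.even_or_odd j with hj | hj
    · have h2 : sawtooth ((b : ℝ) ^ m * x₂) = 0 := by rw [hbm2]; exact sawtooth_even_nat j hj
      have h1 : sawtooth ((b : ℝ) ^ m * x₁) = 1 := by
        rw [hbm1]; exact sawtooth_odd_nat _ (Even.add_one hj)
      simp only [hf, hg, h1, h2, mul_one, mul_zero, sub_zero]
      exact abs_of_nonneg (Real.rpow_nonneg hb0.le _)
    · have h2 : sawtooth ((b : ℝ) ^ m * x₂) = 1 := by rw [hbm2]; exact sawtooth_odd_nat j hj
      have h1 : sawtooth ((b : ℝ) ^ m * x₁) = 0 := by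
        rw [hbm1]; exact sawtooth_even_nat _ (Odd.add_one hj)
      simp only [hf, hg, h1, h2, mul_one, mul_zero, zero_sub]
      rw [abs_neg]
      exact abs_of_nonneg (Real.rpow_nonneg hb0.le _)
  -- bound on the small-k terms
  set B : ℝ := (b : ℝ) ^ (1 - α) with hB
  have hB1 : 1 < B := Real.one_lt_rpow_iff_of_pos hb0 |>.mpr (Or.inl ⟨hb1, by linarith⟩)
  have hBne : B ≠ 1 := ne_of_gt hB1
  have hterm_bound : ∀ k ∈ Finset.range m, |f k - g k| ≤ B ^ k * (b : ℝ) ^ (-(m : ℝ)) := by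
    intro k _
    have hlip := sawtooth_lipschitz ((b : ℝ) ^ k * x₁) ((b : ℝ) ^ k * x₂)
    have hxd : (b : ℝ) ^ k * x₁ - (b : ℝ) ^ k * x₂ = (b : ℝ) ^ k * (b : ℝ) ^ (-(m : ℝ)) := by
      rw [hx₁, hx₂]; ring
    rw [hxd] at hlip
    have hpos : (0 : ℝ) ≤ (b : ℝ) ^ k * (b : ℝ) ^ (-(m : ℝ)) := by positivity
    rw [abs_of_nonneg hpos] at hlip
    have : |f k - g k| = c k * |sawtooth ((b : ℝ) ^ k * x₁) - sawtooth ((b : ℝ) ^ k * x₂)| := by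
      simp only [hf, hg, hc, ← mul_sub, abs_mul]
      rw [abs_of_nonneg (Real.rpow_nonneg hb0.le _)]
    rw [this]
    have hck : (0 : ℝ) ≤ c k := Real.rpow_nonneg hb0.le _
    calc c k * |sawtooth ((b : ℝ) ^ k * x₁) - sawtooth ((b : ℝ) ^ k * x₂)|
        ≤ c k * ((b : ℝ) ^ k * (b : ℝ) ^ (-(m : ℝ))) := mul_le_mul_of_nonneg_left hlip hck
      _ = B ^ k * (b : ℝ) ^ (-(m : ℝ)) := by
          rw [hc, hB, ← Real.rpow_natCast ((b:ℝ) ^ (1 - α)) k, ← Real.rpow_mul hb0.le,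
            ← Real.rpow_natCast (b : ℝ) k, ← Real.rpow_add hb0, ← Real.rpow_add hb0,
            ← Real.rpow_add hb0]
          congr 1
          ring
    done
  have hS : |∑ k ∈ Finset.range m, (f k - g k)| ≤
      (∑ k ∈ Finset.range m, B ^ k) * (b : ℝ) ^ (-(m : ℝ)) := by
    calc |∑ k ∈ Finset.range m, (f k - g k)|
        ≤ ∑ k ∈ Finset.range m, |f k - g k| := Finset.abs_sum_le_sum_abs _ _
      _ ≤ ∑ k ∈ Finset.range m, B ^ k * (b : ℝ) ^ (-(m : ℝ)) :=
          Finset.sum_le_sum hterm_bound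
      _ = (∑ k ∈ Finset.range m, B ^ k) * (b : ℝ) ^ (-(m : ℝ)) := by
          rw [Finset.sum_mul]
  -- N = b^{-αm}
  set N : ℝ := (b : ℝ) ^ (-(α * (m : ℝ))) with hN
  have hN0 : 0 < N := Real.rpow_pos_of_pos hb0 _
  have hcmN : c m = N := by
    simp only [hc, hN]
    rw [show -((m:ℝ)*α) = -(α*(m:ℝ)) by ring]
  have hBN : B ^ m * (b : ℝ) ^ (-(m : ℝ)) = N := by
    rw [hB, hN, ← Real.rpow_natCast ((b:ℝ) ^ (1 - α)) m, ← Real.rpow_mul hb0.le,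
      ← Real.rpow_add hb0]
    congr 1
    ring
  have hgeom : (∑ k ∈ Finset.range m, B ^ k) * (b : ℝ) ^ (-(m : ℝ)) ≤ N / (B - 1) := by
    rw [geom_sum_eq hBne]
    have hBm1 : 0 < B - 1 := by linarith
    rw [div_mul_eq_mul_div, div_le_div_iff₀ hBm1 hBm1]
    have hb' : 0 < (b : ℝ) ^ (-(m : ℝ)) := Real.rpow_pos_of_pos hb0 _
    have : (B ^ m - 1) * (b : ℝ) ^ (-(m : ℝ)) ≤ B ^ m * (b : ℝ) ^ (-(m : ℝ)) := by
      apply mul_le_mul_of_nonneg_right _ hb'.le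
      linarith
    rw [hBN] at this
    nlinarith
  -- conclude
  have hSN : |∑ k ∈ Finset.range m, (f k - g k)| ≤ N / (B - 1) := le_trans hS hgeom
  have habs : N - N / (B - 1) ≤ |Phi b α x₁ - Phi b α x₂| := by
    rw [hsum]
    have h1 : |f m - g m| - |∑ k ∈ Finset.range m, (f k - g k)| ≤
        |(∑ k ∈ Finset.range m, (f k - g k)) + (f m - g m)| := by
      have := abs_add_le (∑ k ∈ Finset.range m, (f k - g k)) (f m - g m)
      have h2 := abs_sub_abs_le_abs_sub (f m - g m)
        (-(∑ k ∈ Finset.range m, (f k - g k)))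
      rw [abs_neg, sub_neg_eq_add] at h2
      rw [add_comm]
      linarith
    rw [hmterm, hcmN] at h1
    linarith
  calc (1 - 1 / (B - 1)) * N = N - N / (B - 1) := by ring
    _ ≤ |Phi b α x₁ - Phi b α x₂| := habs
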